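/- Let ω be a non-quasianalytic weight function, 1 ≤ p < ∞ with conjugate exponent p', m ∈ ℕ, n ∈ ℤ. If {f_α}_{α∈ℕ₀^N} is a family of measurable functions on ℝ^N with |{f_α}|_{m,nω,p'} := ( Σ_α ‖e^{nω} f_α‖_{p'}^{p'} exp(p'm φ*(|α|/m)) )^{1/p'} < ∞ (for p = 1, the sup-norm analogue), then the functional T(φ) := Σ_α (−1)^{|α|} ∫ f_α ∂^α φ is a continuous linear functional on the Banach space (O^m_{n,ω,p}(ℝ^N), r_{m,n,p}), with |T(φ)| ≤ |{f_α}|_{m,nω,p'} · r_{m,n,p}(φ). -/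

import Mathlib

open MeasureTheory Real ENNReal Filter

noncomputable section

abbrev Euc (N : ℕ) := EuclideanSpace ℝ (Fin N)

/-- First-order partial derivative in direction `i`. -/
def pd {N : ℕ} (i : Fin N) (f : Euc N → ℂ) : Euc N → ℂ :=
  fun x => fderiv ℝ f x (EuclideanSpace.single i (1:ℝ))

def pdPow {N : ℕ} (i : Fin N) : ℕ → (Euc N → ℂ) → (Euc N → ℂ)
  | 0, f => f
  | n+1, f => pd i (pdPow i n f)

/-- Multi-index partial derivative `∂^α f`. -/
def mderiv {N : ℕ} (α : Fin N → ℕ) (f : Euc N → ℂ) : Euc N → ℂ :=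
  (List.finRange N).foldr (fun i g => pdPow i (α i) g) f

/-- Length `|α|` of a multi-index. -/
def msize {N : ℕ} (α : Fin N → ℕ) : ℕ := ∑ i, α i

/-- Weighted `L^p` norm `‖e^{w} g‖_p` (value in `ℝ≥0∞`). -/
def wLp {N : ℕ} (p : ℝ≥0∞) (w : Euc N → ℝ) (g : Euc N → ℂ) : ℝ≥0∞ :=
  eLpNorm (fun x => Real.exp (w x) * ‖g x‖) p volume

def youngConj (φ : ℝ → ℝ) (s : ℝ) : ℝ :=
  sSup {y | ∃ t ≥ 0, y = s * t - φ t}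

/-- Young conjugate `φ*` of `φ_ω = ω ∘ exp`. -/
def phiStar (ω : ℝ → ℝ) (s : ℝ) : ℝ :=
  youngConj (fun t => ω (Real.exp t)) s

/-- A non-quasianalytic weight function in the sense of Braun–Meise–Taylor. -/
structure IsWeightFun (ω : ℝ → ℝ) : Prop where
  continuous : ContinuousOn ω (Set.Ici 0)
  mono : MonotoneOn ω (Set.Ici 0)
  nonneg : ∀ t, 0 ≤ t → 0 ≤ ω t
  alpha : ∃ K ≥ 1, ∀ t ≥ 0, ω (2*t) ≤ K * (1 + ω t)
  beta : IntegrableOn (fun t => ω t / (1 + t^2)) (Set.Ici 1)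
  gamma : ∃ a b : ℝ, 0 < b ∧ ∀ t ≥ 0, a + b * Real.log (1+t) ≤ ω t
  delta : ConvexOn ℝ (Set.Ici 0) (fun t => ω (Real.exp t))
  vanish : ∀ t ∈ Set.Icc (0:ℝ) 1, ω t = 0

/-- The norm `r_{m,n,p}` of the space `O^m_{n,ω,p}(ℝ^N)`. -/
def rnorm {N : ℕ} (ω : ℝ → ℝ) (m : ℕ) (n : ℤ) (p : ℝ) (f : Euc N → ℂ) : ℝ≥0∞ :=
  (∑' α : Fin N → ℕ,
    (wLp (ENNReal.ofReal p) (fun x => -((n : ℝ) * ω ‖x‖)) (mderiv α f)) ^ p *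
      ENNReal.ofReal (Real.exp (-((m : ℝ) * p * phiStar ω ((msize α : ℝ) / m))))) ^ (1/p)

/-- The dual norm `|{f_α}|_{m,nω,p'}` (with the sup-norm analogue when `p' = ∞`). -/
def dualNorm {N : ℕ} (ω : ℝ → ℝ) (m : ℕ) (n : ℤ) (p' : ℝ≥0∞)
    (f : (Fin N → ℕ) → Euc N → ℂ) : ℝ≥0∞ :=
  if p' = ⊤ then
    ⨆ α : Fin N → ℕ,
      wLp ⊤ (fun x => (n : ℝ) * ω ‖x‖) (f α) *
        ENNReal.ofReal (Real.exp ((m : ℝ) * phiStar ω ((msize α : ℝ) / m)))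
  else
    (∑' α : Fin N → ℕ,
      (wLp p' (fun x => (n : ℝ) * ω ‖x‖) (f α)) ^ p'.toReal *
        ENNReal.ofReal (Real.exp (p'.toReal * (m : ℝ) * phiStar ω ((msize α : ℝ) / m)))) ^
      (1 / p'.toReal)


lemma contDiff_pd {N : ℕ} (i : Fin N) {f : Euc N → ℂ} (hf : ContDiff ℝ (⊤ : ℕ∞) f) :
    ContDiff ℝ (⊤ : ℕ∞) (pd i f) := by
  unfold pd
  exact (hf.fderiv_right (by simp)).clm_apply contDiff_const

lemma contDiff_pdPow {N : ℕ} (i : Fin N) (k : ℕ) {f : Euc N → ℂ} (hf : ContDiff ℝ (⊤ : ℕ∞) f) :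
    ContDiff ℝ (⊤ : ℕ∞) (pdPow i k f) := by
  induction k with
  | zero => exact hf
  | succ k ih => exact contDiff_pd i ih

lemma contDiff_mderiv {N : ℕ} (α : Fin N → ℕ) {f : Euc N → ℂ} (hf : ContDiff ℝ (⊤ : ℕ∞) f) :
    ContDiff ℝ (⊤ : ℕ∞) (mderiv α f) := by
  unfold mderiv
  generalize List.finRange N = l
  induction l with
  | nil => exact hf
  | cons i l ih => exact contDiff_pdPow i (α i) ih

lemma cont_omega_norm {N : ℕ} {ω : ℝ → ℝ} (hω : IsWeightFun ω) :
    Continuous (fun x : Euc N => ω ‖x‖) := by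
  rw [← continuousOn_univ]
  exact hω.continuous.comp continuous_norm.continuousOn (fun x _ => Set.mem_Ici.2 (norm_nonneg x))

/-- A family `{f_α}` with finite dual norm induces a continuous linear functional
`T(φ) = Σ_α (-1)^{|α|} ∫ f_α ∂^α φ` on `(O^m_{n,ω,p}(ℝ^N), r_{m,n,p})`. -/
theorem dual_family_gives_functional
    {N : ℕ} (ω : ℝ → ℝ) (hω : IsWeightFun ω)
    (m : ℕ) (hm : 0 < m) (n : ℤ) (p : ℝ) (hp : 1 ≤ p)
    (p' : ℝ≥0∞) (hconj : (ENNReal.ofReal p)⁻¹ + p'⁻¹ = 1)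
    (f : (Fin N → ℕ) → Euc N → ℂ)
    (hmeas : ∀ α, AEStronglyMeasurable (f α) volume)
    (hfin : dualNorm ω m n p' f < ⊤) :
    ∀ φ : Euc N → ℂ, ContDiff ℝ (⊤ : ℕ∞) φ → rnorm ω m n p φ < ⊤ →
      Summable (fun α : Fin N → ℕ => (-1 : ℂ) ^ (msize α) * ∫ x, f α x * mderiv α φ x) ∧
      ENNReal.ofReal ‖∑' α : Fin N → ℕ,
          (-1 : ℂ) ^ (msize α) * ∫ x, f α x * mderiv α φ x‖ ≤
        dualNorm ω m n p' f * rnorm ω m n p φ := by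
  intro φ hφ hr
  have hp0 : (0:ℝ) < p := lt_of_lt_of_le one_pos hp
  set a : ℝ≥0∞ := ENNReal.ofReal p with ha
  have ha0 : a ≠ 0 := by
    simp only [ha, ne_eq, ENNReal.ofReal_eq_zero, not_le]; exact hp0
  have haT : a ≠ ⊤ := ENNReal.ofReal_ne_top
  -- the terms of the functional
  set T : (Fin N → ℕ) → ℂ :=
    fun α => (-1 : ℂ) ^ (msize α) * ∫ x, f α x * mderiv α φ x with hT
  set s : (Fin N → ℕ) → ℝ := fun α => (m : ℝ) * phiStar ω ((msize α : ℝ) / m) with hs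
  set A : (Fin N → ℕ) → ℝ≥0∞ := fun α =>
    wLp p' (fun x => (n : ℝ) * ω ‖x‖) (f α) * ENNReal.ofReal (Real.exp (s α)) with hA
  set B : (Fin N → ℕ) → ℝ≥0∞ := fun α =>
    wLp a (fun x => -((n : ℝ) * ω ‖x‖)) (mderiv α φ) * ENNReal.ofReal (Real.exp (-(s α)))
    with hB
  have hgc : ∀ α, Continuous (mderiv α φ) := fun α => (contDiff_mderiv α hφ).continuous
  have hωc : Continuous (fun x : Euc N => ω ‖x‖) := cont_omega_norm hω
  -- pointwise Hölder estimate
  have key : ∀ α, ENNReal.ofReal ‖T α‖ ≤ A α * B α := by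
    intro α
    have hAB : A α * B α
        = wLp p' (fun x => (n : ℝ) * ω ‖x‖) (f α) *
          wLp a (fun x => -((n : ℝ) * ω ‖x‖)) (mderiv α φ) := by
      rw [hA, hB]
      calc (wLp p' (fun x => (n : ℝ) * ω ‖x‖) (f α) * ENNReal.ofReal (Real.exp (s α))) *
            (wLp a (fun x => -((n : ℝ) * ω ‖x‖)) (mderiv α φ) *
              ENNReal.ofReal (Real.exp (-(s α))))
          = (wLp p' (fun x => (n : ℝ) * ω ‖x‖) (f α) *
              wLp a (fun x => -((n : ℝ) * ω ‖x‖)) (mderiv α φ)) *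
            (ENNReal.ofReal (Real.exp (s α)) * ENNReal.ofReal (Real.exp (-(s α)))) := by
            ring
        _ = _ := by
            rw [← ENNReal.ofReal_mul (Real.exp_nonneg _), ← Real.exp_add, add_neg_cancel,
              Real.exp_zero, ENNReal.ofReal_one, mul_one]
    rw [hAB]
    have hTnorm : ‖T α‖ = ‖∫ x, f α x * mderiv α φ x‖ := by
      rw [hT, norm_mul, norm_pow, norm_neg, norm_one, one_pow, one_mul]
    rw [hTnorm, ofReal_norm]
    set F : Euc N → ℝ := fun x => Real.exp ((n : ℝ) * ω ‖x‖) * ‖f α x‖ with hF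
    set G : Euc N → ℝ := fun x => Real.exp (-((n : ℝ) * ω ‖x‖)) * ‖mderiv α φ x‖ with hG
    have hFmeas : AEStronglyMeasurable F volume :=
      ((Real.continuous_exp.comp (continuous_const.mul hωc)).aestronglyMeasurable).mul
        (hmeas α).norm
    have hGmeas : AEStronglyMeasurable G volume :=
      ((Real.continuous_exp.comp (continuous_const.mul hωc).neg).aestronglyMeasurable).mul
        (hgc α).norm.aestronglyMeasurable
    calc (‖∫ x, f α x * mderiv α φ x‖₊ : ℝ≥0∞)
        ≤ ∫⁻ x, ‖f α x * mderiv α φ x‖₊ ∂volume := enorm_integral_le_lintegral_enorm _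
      _ = eLpNorm (fun x => F x * G x) 1 volume := by
          rw [eLpNorm_one_eq_lintegral_enorm]
          refine (lintegral_congr fun x => ?_).symm
          have hFG : F x * G x = ‖f α x * mderiv α φ x‖ := by
            calc F x * G x
                = (Real.exp ((n : ℝ) * ω ‖x‖) * Real.exp (-((n : ℝ) * ω ‖x‖))) *
                  (‖f α x‖ * ‖mderiv α φ x‖) := by rw [hF, hG]; ring
              _ = ‖f α x * mderiv α φ x‖ := by
                  rw [← Real.exp_add, add_neg_cancel, Real.exp_zero, one_mul, norm_mul]
          rw [hFG, enorm_norm, enorm_eq_nnnorm]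
      _ ≤ eLpNorm F p' volume * eLpNorm G a volume := by
          have hHT : ENNReal.HolderTriple p' a 1 := ⟨by rw [inv_one, add_comm]; exact hconj⟩
          have h' := eLpNorm_le_eLpNorm_mul_eLpNorm'_of_norm (p := p') (q := a) (r := 1) hFmeas hGmeas (· * ·) 1
            (Eventually.of_forall fun x => by simp only [NNReal.coe_one, one_mul]; exact norm_mul_le _ _)
          simpa using h'
      _ = _ := rfl
  -- the sum estimate
  have hsum : ∑' α, A α * B α ≤ dualNorm ω m n p' f * rnorm ω m n p φ := by
    by_cases hp' : p' = ⊤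
    · -- here p = 1
      have hp1 : p = 1 := by
        rw [hp'] at hconj
        simp only [ENNReal.inv_top, add_zero, ENNReal.inv_eq_one] at hconj
        rw [ha] at hconj
        exact ENNReal.ofReal_eq_one.1 hconj
      have hdual : dualNorm ω m n p' f = ⨆ α, A α := by
        unfold dualNorm
        rw [if_pos hp']
        simp only [hA, hs, hp']
      have hrn : rnorm ω m n p φ = ∑' α, B α := by
        unfold rnorm
        rw [hp1]
        rw [show (1:ℝ)/1 = 1 by norm_num, ENNReal.rpow_one]
        refine tsum_congr fun α => ?_
        rw [ENNReal.rpow_one]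
        simp only [hB, hs, ha, hp1, mul_one]
      calc ∑' α, A α * B α
          ≤ ∑' α, (⨆ β, A β) * B α :=
            ENNReal.tsum_le_tsum fun α => mul_le_mul_left (le_iSup A α) _
        _ = (⨆ β, A β) * ∑' α, B α := ENNReal.tsum_mul_left
        _ = _ := by rw [hdual, hrn]
    · have hp'0 : p' ≠ 0 := by
        intro h
        rw [h] at hconj
        simp at hconj
      set q : ℝ := p'.toReal with hq
      have hq0 : 0 < q := ENNReal.toReal_pos hp'0 hp'
      have hinv : p⁻¹ + q⁻¹ = 1 := by
        have h := congrArg ENNReal.toReal hconj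
        rw [ENNReal.toReal_add (ENNReal.inv_ne_top.2 ha0) (ENNReal.inv_ne_top.2 hp'0),
          ENNReal.toReal_inv, ENNReal.toReal_inv, ha, ENNReal.toReal_ofReal hp0.le] at h
        simpa using h
      have hp1 : 1 < p := by
        rcases eq_or_lt_of_le hp with h | h
        · exfalso
          have hqpos : (0:ℝ) < q⁻¹ := inv_pos.2 hq0
          rw [← h, inv_one] at hinv
          linarith
        · exact h
      have hqp : q.HolderConjugate p := (Real.holderConjugate_iff.2 ⟨hp1, hinv⟩).symm
      have hcnt : ∀ g : (Fin N → ℕ) → ℝ≥0∞, AEMeasurable g (Measure.count) :=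
        fun g => (measurable_of_countable g).aemeasurable
      have hH := ENNReal.lintegral_mul_le_Lp_mul_Lq (Measure.count) hqp (hcnt A) (hcnt B)
      rw [lintegral_count, lintegral_count, lintegral_count] at hH
      have h1 : ∑' α, A α * B α = ∑' α, (A * B) α := by
        refine tsum_congr fun α => ?_
        simp [Pi.mul_apply]
      have h2 : (∑' α, A α ^ q) ^ (1/q) = dualNorm ω m n p' f := by
        unfold dualNorm
        rw [if_neg hp', ← hq]
        congr 1
        refine tsum_congr fun α => ?_
        rw [hA, ENNReal.mul_rpow_of_nonneg _ _ hq0.le,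
          ENNReal.ofReal_rpow_of_pos (Real.exp_pos _), ← Real.exp_mul]
        congr 2
        simp only [hs]
        ring
      have h3 : (∑' α, B α ^ p) ^ (1/p) = rnorm ω m n p φ := by
        unfold rnorm
        congr 1
        refine tsum_congr fun α => ?_
        rw [hB, ← ha, ENNReal.mul_rpow_of_nonneg _ _ hp0.le,
          ENNReal.ofReal_rpow_of_pos (Real.exp_pos _), ← Real.exp_mul]
        congr 2
        simp only [hs]
        ring
      rw [h1, ← h2, ← h3]
      exact hH
  -- conclusion
  have hprod_lt : dualNorm ω m n p' f * rnorm ω m n p φ < ⊤ := ENNReal.mul_lt_top hfin hr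
  have hSne : ∑' α, A α * B α ≠ ⊤ := (hsum.trans_lt hprod_lt).ne
  have hle : ∀ α, ‖T α‖ ≤ (A α * B α).toReal := fun α =>
    (ENNReal.ofReal_le_iff_le_toReal (ENNReal.ne_top_of_tsum_ne_top hSne α)).1 (key α)
  have hnorm_summable : Summable fun α => ‖T α‖ :=
    Summable.of_nonneg_of_le (fun _ => norm_nonneg _) hle (ENNReal.summable_toReal hSne)
  refine ⟨hnorm_summable.of_norm, ?_⟩
  calc ENNReal.ofReal ‖∑' α, T α‖
      ≤ ENNReal.ofReal (∑' α, ‖T α‖) :=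
        ENNReal.ofReal_le_ofReal (norm_tsum_le_tsum_norm hnorm_summable)
    _ = ∑' α, ENNReal.ofReal ‖T α‖ :=
        ENNReal.ofReal_tsum_of_nonneg (fun _ => norm_nonneg _) hnorm_summable
    _ ≤ ∑' α, A α * B α := ENNReal.tsum_le_tsum key
    _ ≤ _ := hsum
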